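/- arXiv:2404.07172 — 2 statements merged into one kernel-verified Lean document; each statement's English description precedes it below -/
import Mathlib

section
/- Let f : ℝᵐ × ℝⁿ → ℝ be twice continuously differentiable and define the block matrix v'(x,y) = [[∇²ₓₓ f, ∇²ₓᵧ f], [−∇²ᵧₓ f, −∇²ᵧᵧ f]]. Then v'(x,y) + v'(x,y)ᵀ is negative semi-definite if and only if ∇²ₓₓ f(x,y) is negative semi-definite and ∇²ᵧᵧ f(x,y) is positive semi-definite. -/
open Matrix

variable {m n : ℕ}

/-- ∇²ₓₓ f as a matrix of second partial derivatives. -/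
noncomputable def hessXX (f : (Fin m → ℝ) × (Fin n → ℝ) → ℝ)
    (p : (Fin m → ℝ) × (Fin n → ℝ)) : Matrix (Fin m) (Fin m) ℝ :=
  fun i j => fderiv ℝ (fun q => fderiv ℝ f q (Pi.single j 1, 0)) p (Pi.single i 1, 0)

/-- ∇²ₓᵧ f as a matrix of second partial derivatives. -/
noncomputable def hessXY (f : (Fin m → ℝ) × (Fin n → ℝ) → ℝ)
    (p : (Fin m → ℝ) × (Fin n → ℝ)) : Matrix (Fin m) (Fin n) ℝ :=
  fun i j => fderiv ℝ (fun q => fderiv ℝ f q (0, Pi.single j 1)) p (Pi.single i 1, 0)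

/-- ∇²ᵧₓ f as a matrix of second partial derivatives. -/
noncomputable def hessYX (f : (Fin m → ℝ) × (Fin n → ℝ) → ℝ)
    (p : (Fin m → ℝ) × (Fin n → ℝ)) : Matrix (Fin n) (Fin m) ℝ :=
  fun i j => fderiv ℝ (fun q => fderiv ℝ f q (Pi.single j 1, 0)) p (0, Pi.single i 1)

/-- ∇²ᵧᵧ f as a matrix of second partial derivatives. -/
noncomputable def hessYY (f : (Fin m → ℝ) × (Fin n → ℝ) → ℝ)
    (p : (Fin m → ℝ) × (Fin n → ℝ)) : Matrix (Fin n) (Fin n) ℝ :=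
  fun i j => fderiv ℝ (fun q => fderiv ℝ f q (0, Pi.single j 1)) p (0, Pi.single i 1)

/-!
By symmetry of second derivatives, `∇²ᵧₓ f = (∇²ₓᵧ f)ᵀ`, so the off-diagonal blocks of `v'` are
minus the transposes of each other and cancel in `v' + v'ᵀ`. What remains is the block-diagonal
matrix `diag(2 ∇²ₓₓ f, -2 ∇²ᵧᵧ f)`, which is semidefinite exactly when each block is.
-/

theorem fderiv_fderiv_apply_comm {𝕜 E F : Type*} [RCLike 𝕜] [NormedAddCommGroup E]
    [NormedSpace 𝕜 E] [NormedAddCommGroup F] [NormedSpace 𝕜 F] {f : E → F} {p : E}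
    (hf : ContDiffAt 𝕜 2 f p) (u v : E) :
    fderiv 𝕜 (fun q => fderiv 𝕜 f q u) p v = fderiv 𝕜 (fun q => fderiv 𝕜 f q v) p u := by
  have hf' : DifferentiableAt 𝕜 (fderiv 𝕜 f) p :=
    (hf.fderiv_right (m := 1) le_rfl).differentiableAt one_ne_zero
  simpa [fderiv_clm_apply hf' (differentiableAt_const _)] using
    (hf.isSymmSndFDerivAt (by simp)).eq v u

theorem Matrix.posSemidef_add_self_iff {n K : Type*} [Field K] [LinearOrder K] [IsOrderedRing K]
    [StarRing K] [StarOrderedRing K] {X : Matrix n n K} :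
    (X + X).PosSemidef ↔ X.PosSemidef := by
  rw [← two_smul K X]
  refine ⟨fun h => ?_, fun h => h.smul zero_le_two⟩
  simpa using h.smul (inv_nonneg.mpr (zero_le_two (α := K)))

theorem Matrix.fromBlocks_add_transpose_of_neg_transpose {m n α : Type*} [AddCommGroup α]
    (A : Matrix m m α) (B : Matrix m n α) (D : Matrix n n α) :
    fromBlocks A B (-Bᵀ) D + (fromBlocks A B (-Bᵀ) D)ᵀ = fromBlocks (A + Aᵀ) 0 0 (D + Dᵀ) := by
  simp [fromBlocks_transpose, fromBlocks_add]

theorem Matrix.posSemidef_fromBlocks_zero_iff {m n R : Type*} [Fintype m] [Fintype n]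
    [CommRing R] [PartialOrder R] [StarRing R] [IsOrderedRing R]
    {A : Matrix m m R} {D : Matrix n n R} :
    (fromBlocks A 0 0 D).PosSemidef ↔ A.PosSemidef ∧ D.PosSemidef := by
  refine ⟨fun h => ⟨h.submatrix Sum.inl, h.submatrix Sum.inr⟩, fun ⟨hA, hD⟩ => ?_⟩
  refine .of_dotProduct_mulVec_nonneg (hA.isHermitian.fromBlocks (by simp) hD.isHermitian)
    fun x => ?_
  rw [← Sum.elim_comp_inl_inr x]
  simpa only [fromBlocks_mulVec, zero_mulVec, add_zero, zero_add, Function.star_sumElim,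
    sumElim_dotProduct_sumElim, Sum.elim_comp_inl, Sum.elim_comp_inr] using
    add_nonneg (hA.dotProduct_mulVec_nonneg (x ∘ Sum.inl)) (hD.dotProduct_mulVec_nonneg (x ∘ Sum.inr))

section Hessian

variable {f : (Fin m → ℝ) × (Fin n → ℝ) → ℝ} {p : (Fin m → ℝ) × (Fin n → ℝ)}

theorem hessYX_eq_transpose_hessXY (hf : ContDiffAt ℝ 2 f p) : hessYX f p = (hessXY f p)ᵀ :=
  Matrix.ext fun _ _ => fderiv_fderiv_apply_comm hf _ _

theorem isSymm_hessXX (hf : ContDiffAt ℝ 2 f p) : (hessXX f p).IsSymm :=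
  Matrix.ext fun _ _ => fderiv_fderiv_apply_comm hf _ _

theorem isSymm_hessYY (hf : ContDiffAt ℝ 2 f p) : (hessYY f p).IsSymm :=
  Matrix.ext fun _ _ => fderiv_fderiv_apply_comm hf _ _

end Hessian

/-- For a C² zero-sum game, v' + v'ᵀ is negative semidefinite iff ∇²ₓₓ f is negative
    semidefinite and ∇²ᵧᵧ f is positive semidefinite. -/
theorem zero_sum_game_jacobian_negSemidef_iff
    (f : (Fin m → ℝ) × (Fin n → ℝ) → ℝ) (hf : ContDiff ℝ 2 f)
    (p : (Fin m → ℝ) × (Fin n → ℝ)) :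
    (-(Matrix.fromBlocks (hessXX f p) (hessXY f p) (-(hessYX f p)) (-(hessYY f p)) +
      (Matrix.fromBlocks (hessXX f p) (hessXY f p) (-(hessYX f p)) (-(hessYY f p)))ᵀ)).PosSemidef ↔
      (-(hessXX f p)).PosSemidef ∧ (hessYY f p).PosSemidef := by
  have hfp := hf.contDiffAt (x := p)
  rw [hessYX_eq_transpose_hessXY hfp, fromBlocks_add_transpose_of_neg_transpose,
    (isSymm_hessXX hfp).eq, transpose_neg, (isSymm_hessYY hfp).eq, fromBlocks_neg]
  simp only [neg_add, neg_neg, neg_zero]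
  rw [posSemidef_fromBlocks_zero_iff, posSemidef_add_self_iff, posSemidef_add_self_iff]
end

section
/- Let v : ℝⁿ → ℝⁿ be continuously differentiable, λ ∈ (0,1), h > 0, and define F(p) = p + h[(λI + v(p)v(p)ᵀ)⁻¹ − I] v(p). Suppose p̄ satisfies v(p̄) = 0 and every eigenvalue ξ of v'(p̄) has Re(ξ) < 0 and h(1/λ − 1) < (1/|Re(ξ)|)·2/(1 + (Im(ξ)/Re(ξ))²). Then there is a neighborhood of p̄ on which the iterates pₖ₊₁ = F(pₖ) converge to p̄ at least linearly. -/
/-!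
By Sherman–Morrison, `(λI + uuᵀ)⁻¹ u = (λ + |u|²)⁻¹ u`, so `F p = p + g(p) v(p)` with
`g(p) = h((λ + |v(p)|²)⁻¹ − 1)`. Since `v(p̄) = 0`, `p̄` is a fixed point and
`F'(p̄) = I + c v'(p̄)` with `c = h(1/λ − 1) > 0`; its eigenvalues `1 + cξ` lie in the open unit
disc precisely under the step-size condition. Gelfand's formula then gives `‖F'(p̄)^m‖ ≤ θ^m`
for some `θ < 1`, so `F'(p̄)` contracts by `θ` in the adapted norm `Σ_{i<m} θ^{-i} ‖F'(p̄)^i x‖`,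
and by differentiability `F` contracts towards `p̄` on a small ball of that norm (Ostrowski).
-/

open Filter Topology Matrix Finset
open scoped NNReal

namespace Matrix

variable {ι : Type*} [Fintype ι] [DecidableEq ι]

theorem smul_one_add_vecMulVec_self_mulVec (lam : ℝ) (u : ι → ℝ) :
    (lam • (1 : Matrix ι ι ℝ) + vecMulVec u u) *ᵥ u = (lam + u ⬝ᵥ u) • u := by
  rw [add_mulVec, smul_mulVec, one_mulVec, vecMulVec_mulVec, op_smul_eq_smul, add_smul]

theorem inv_smul_one_add_vecMulVec_self_mulVec {lam : ℝ} (hlam : 0 < lam) (u : ι → ℝ) :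
    (lam • (1 : Matrix ι ι ℝ) + vecMulVec u u)⁻¹ *ᵥ u = (lam + u ⬝ᵥ u)⁻¹ • u := by
  have hpos : (lam • (1 : Matrix ι ι ℝ) + vecMulVec u u).PosDef :=
    (PosDef.one.smul hlam).add_posSemidef (posSemidef_vecMulVec_self_star u)
  have := hpos.isUnit.invertible
  have hs : lam + u ⬝ᵥ u ≠ 0 :=
    (add_pos_of_pos_of_nonneg hlam (dotProduct_self_star_nonneg u)).ne'
  refine inv_mulVec_eq_vec ?_
  rw [mulVec_smul, smul_one_add_vecMulVec_self_mulVec, smul_smul, inv_mul_cancel₀ hs, one_smul]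

end Matrix

/-- The step-size condition says `c |ξ|² < -2 Re ξ`, that is `|1 + c ξ|² < 1`. -/
theorem Complex.norm_one_add_mul_lt_one {c : ℝ} (hc : 0 < c) {ξ : ℂ} (hre : ξ.re < 0)
    (hlt : c < (1 / |ξ.re|) * (2 / (1 + (ξ.im / ξ.re) ^ 2))) :
    ‖1 + (c : ℂ) * ξ‖ < 1 := by
  have hre0 : ξ.re ≠ 0 := hre.ne
  have hnormSq : 0 < ξ.re ^ 2 + ξ.im ^ 2 := by positivity
  have hbound : (1 / |ξ.re|) * (2 / (1 + (ξ.im / ξ.re) ^ 2))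
      = -2 * ξ.re / (ξ.re ^ 2 + ξ.im ^ 2) := by
    rw [abs_of_neg hre]
    field_simp
  rw [hbound, lt_div_iff₀ hnormSq] at hlt
  rw [← sq_lt_one_iff₀ (norm_nonneg _), Complex.sq_norm, Complex.normSq_apply]
  simp only [Complex.add_re, Complex.add_im, Complex.mul_re, Complex.mul_im,
    Complex.one_re, Complex.one_im, Complex.ofReal_re, Complex.ofReal_im]
  nlinarith

theorem HasFDerivAt.add_smul_of_apply_eq_zero {𝕜 E : Type*} [NontriviallyNormedField 𝕜]
    [NormedAddCommGroup E] [NormedSpace 𝕜 E] {g : E → 𝕜} {v : E → E} {v' : E →L[𝕜] E} {x : E}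
    (hv : HasFDerivAt v v' x) (hg : DifferentiableAt 𝕜 g x) (hvx : v x = 0) :
    HasFDerivAt (fun p => p + g p • v p) (ContinuousLinearMap.id 𝕜 E + g x • v') x := by
  have hsmul := hg.hasFDerivAt.smul hv
  rw [hvx, ContinuousLinearMap.smulRight_zero, add_zero] at hsmul
  exact (hasFDerivAt_id x).add hsmul

namespace spectrum

theorem one_add_smul_eq_image {𝕜 A : Type*} [Field 𝕜] [Ring A] [Algebra 𝕜 A]
    {c : 𝕜} (hc : c ≠ 0) (a : A) :
    spectrum 𝕜 (1 + c • a) = (fun ξ => 1 + c * ξ) '' spectrum 𝕜 a := by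
  rw [← map_one (algebraMap 𝕜 A), ← singleton_add_eq, ← Units.val_mk0 hc, ← Units.smul_def,
    unit_smul_eq_smul, Set.singleton_add, ← Set.image_smul, Set.image_image]
  rfl

variable {A : Type*} [NormedRing A] [NormedAlgebra ℂ A] [CompleteSpace A] {a : A}

theorem spectralRadius_lt_one_of_forall_norm_lt_one (ha : ∀ μ ∈ spectrum ℂ a, ‖μ‖ < 1) :
    spectralRadius ℂ a < 1 := by
  rcases (spectrum ℂ a).eq_empty_or_nonempty with hempty | hne
  · simp [spectralRadius, hempty]
  · exact spectralRadius_lt_of_forall_lt_of_nonempty hne fun μ hμ => ha μ hμ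

theorem eventually_nnnorm_pow_lt {θ : ℝ≥0} (ha : spectralRadius ℂ a < θ) :
    ∀ᶠ m : ℕ in atTop, ‖a ^ m‖₊ < θ ^ m := by
  filter_upwards [(pow_nnnorm_pow_one_div_tendsto_nhds_spectralRadius a).eventually_lt_const ha,
    eventually_ge_atTop 1] with m hlt hm
  have hm0 : (m : ℝ) ≠ 0 := by positivity
  have hpow := ENNReal.rpow_lt_rpow hlt (by positivity : (0 : ℝ) < m)
  rw [← ENNReal.rpow_mul, one_div, inv_mul_cancel₀ hm0, ENNReal.rpow_one,
    ENNReal.rpow_natCast, ← ENNReal.coe_pow] at hpow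
  exact_mod_cast hpow

end spectrum

namespace ContinuousLinearMap

section ComplexMatrix

attribute [local instance] Matrix.linftyOpNormedAddCommGroup Matrix.linftyOpNormedRing
  Matrix.linftyOpNormedAlgebra

variable {ι : Type*} [Fintype ι] [DecidableEq ι]

/-- Taken over `ℂ` so that its spectrum also contains the non-real eigenvalues. -/
noncomputable abbrev complexMatrix (T : (ι → ℝ) →L[ℝ] (ι → ℝ)) : Matrix ι ι ℂ :=
  (LinearMap.toMatrix' (T : (ι → ℝ) →ₗ[ℝ] (ι → ℝ))).map (algebraMap ℝ ℂ)

theorem complexMatrix_id_add_smul (T : (ι → ℝ) →L[ℝ] (ι → ℝ)) (c : ℝ) :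
    (ContinuousLinearMap.id ℝ _ + c • T).complexMatrix = 1 + (c : ℂ) • T.complexMatrix := by
  ext i j
  simp [one_apply, Pi.single_apply, apply_ite Complex.ofReal]

theorem _root_.Matrix.linfty_opNorm_map_algebraMap (A : Matrix ι ι ℝ) :
    ‖A.map (algebraMap ℝ ℂ)‖ = ‖A‖ := by
  simp [linfty_opNorm_def]

theorem norm_pow_eq_norm_complexMatrix_pow (T : (ι → ℝ) →L[ℝ] (ι → ℝ)) (m : ℕ) :
    ‖T ^ m‖ = ‖T.complexMatrix ^ m‖ := by
  set B := LinearMap.toMatrix' (T : (ι → ℝ) →ₗ[ℝ] (ι → ℝ))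
  have hTm : LinearMap.toMatrix' ((T ^ m : (ι → ℝ) →L[ℝ] (ι → ℝ)) : (ι → ℝ) →ₗ[ℝ] (ι → ℝ))
      = B ^ m := by
    rw [toLinearMap_pow]
    exact map_pow LinearMap.toMatrixAlgEquiv' _ m
  rw [← linfty_opNorm_toMatrix, hTm, ← Matrix.linfty_opNorm_map_algebraMap]
  exact congrArg norm (map_pow (algebraMap ℝ ℂ).mapMatrix B m)

theorem exists_norm_pow_le_of_spectrum_complexMatrix (T : (ι → ℝ) →L[ℝ] (ι → ℝ))
    (hT : ∀ μ ∈ spectrum ℂ T.complexMatrix, ‖μ‖ < 1) :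
    ∃ θ : ℝ, 0 < θ ∧ θ < 1 ∧ ∃ m : ℕ, 1 ≤ m ∧ ‖T ^ m‖ ≤ θ ^ m := by
  have := FiniteDimensional.complete ℂ (Matrix ι ι ℂ)
  obtain ⟨θ, hρθ, hθ1⟩ := ENNReal.lt_iff_exists_nnreal_btwn.mp
    (spectrum.spectralRadius_lt_one_of_forall_norm_lt_one hT)
  obtain ⟨m, hlt, hm⟩ :=
    ((spectrum.eventually_nnnorm_pow_lt hρθ).and (eventually_ge_atTop 1)).exists
  refine ⟨θ, by exact_mod_cast pos_of_gt hρθ, by exact_mod_cast hθ1, m, hm, ?_⟩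
  rw [norm_pow_eq_norm_complexMatrix_pow]
  exact_mod_cast hlt.le

end ComplexMatrix

section AdaptedNorm

variable {𝕜 E : Type*} [NontriviallyNormedField 𝕜] [NormedAddCommGroup E] [NormedSpace 𝕜 E]

/-- A norm adapted to `T`: once `‖T ^ m‖ ≤ θ ^ m`, it is contracted by `T` by the factor `θ`. -/
noncomputable def adaptedNorm (T : E →L[𝕜] E) (θ : ℝ) (m : ℕ) (x : E) : ℝ :=
  ∑ i ∈ range m, θ⁻¹ ^ i * ‖(T ^ i) x‖

variable {T : E →L[𝕜] E} {θ : ℝ} {m : ℕ}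

theorem norm_le_adaptedNorm (hθ : 0 ≤ θ) (hm : 1 ≤ m) (x : E) : ‖x‖ ≤ T.adaptedNorm θ m x :=
  calc ‖x‖ = θ⁻¹ ^ 0 * ‖(T ^ 0) x‖ := by simp
    _ ≤ T.adaptedNorm θ m x :=
      single_le_sum (f := fun i => θ⁻¹ ^ i * ‖(T ^ i) x‖) (fun i _ => by positivity)
        (mem_range.mpr hm)

theorem adaptedNorm_nonneg (hθ : 0 ≤ θ) (x : E) : 0 ≤ T.adaptedNorm θ m x :=
  sum_nonneg fun i _ => by positivity

theorem adaptedNorm_zero : T.adaptedNorm θ m 0 = 0 := by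
  simp [adaptedNorm]

theorem continuous_adaptedNorm : Continuous (T.adaptedNorm θ m) := by
  unfold adaptedNorm
  fun_prop

theorem adaptedNorm_add_le (hθ : 0 ≤ θ) (x y : E) :
    T.adaptedNorm θ m (x + y) ≤ T.adaptedNorm θ m x + T.adaptedNorm θ m y := by
  rw [adaptedNorm, adaptedNorm, adaptedNorm, ← sum_add_distrib]
  gcongr with i
  rw [map_add, ← mul_add]
  gcongr
  exact norm_add_le _ _

theorem adaptedNorm_le (hθ : 0 ≤ θ) (x : E) :
    T.adaptedNorm θ m x ≤ (∑ i ∈ range m, θ⁻¹ ^ i * ‖T ^ i‖) * ‖x‖ := by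
  rw [adaptedNorm, sum_mul]
  refine sum_le_sum fun i _ => ?_
  rw [mul_assoc]
  exact mul_le_mul_of_nonneg_left (le_opNorm _ _) (by positivity)

/-- `N (T x)` is `θ` times `N x` with its `i = 0` term replaced by an `i = m` term, and
`‖T ^ m‖ ≤ θ ^ m` bounds the latter by the former. -/
theorem adaptedNorm_apply_le (hθ : 0 < θ) (hTm : ‖T ^ m‖ ≤ θ ^ m) (x : E) :
    T.adaptedNorm θ m (T x) ≤ θ * T.adaptedNorm θ m x := by
  set g : ℕ → ℝ := fun i => θ⁻¹ ^ i * ‖(T ^ i) x‖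
  have hshift : T.adaptedNorm θ m (T x) = θ * ∑ i ∈ range m, g (i + 1) := by
    rw [adaptedNorm, mul_sum]
    refine sum_congr rfl fun i _ => ?_
    have hscalar : θ * θ⁻¹ ^ (i + 1) = θ⁻¹ ^ i := by
      rw [pow_succ]
      field_simp
    rw [← mul_apply_eq_comp, ← pow_succ, ← mul_assoc, hscalar]
  have hlast : g m ≤ g 0 :=
    calc g m ≤ θ⁻¹ ^ m * (θ ^ m * ‖x‖) :=
          mul_le_mul_of_nonneg_left ((le_opNorm _ _).trans (by gcongr)) (by positivity)
      _ = g 0 := by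
          rw [← mul_assoc, ← mul_pow, inv_mul_cancel₀ hθ.ne', one_pow, one_mul]
          simp [g]
  have htelescope := (sum_range_succ' g m).symm.trans (sum_range_succ g m)
  rw [hshift]
  gcongr
  change _ ≤ ∑ i ∈ range m, g i
  linarith

theorem adaptedNorm_le_of_norm_sub_apply_le (hθ : 0 < θ) (hTm : ‖T ^ m‖ ≤ θ ^ m) (hm : 1 ≤ m)
    {y z : E} {ε : ℝ} (hε : 0 ≤ ε) (h : ‖z - T y‖ ≤ ε * ‖y‖) :
    T.adaptedNorm θ m z
      ≤ (θ + (∑ i ∈ range m, θ⁻¹ ^ i * ‖T ^ i‖) * ε) * T.adaptedNorm θ m y := by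
  set K := ∑ i ∈ range m, θ⁻¹ ^ i * ‖T ^ i‖
  have hK : 0 ≤ K := sum_nonneg fun i _ => by positivity
  calc T.adaptedNorm θ m z = T.adaptedNorm θ m (T y + (z - T y)) := by rw [add_sub_cancel]
    _ ≤ T.adaptedNorm θ m (T y) + T.adaptedNorm θ m (z - T y) := adaptedNorm_add_le hθ.le _ _
    _ ≤ θ * T.adaptedNorm θ m y + K * (ε * ‖y‖) :=
        add_le_add (adaptedNorm_apply_le hθ hTm y)
          ((adaptedNorm_le hθ.le _).trans (mul_le_mul_of_nonneg_left h hK))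
    _ ≤ θ * T.adaptedNorm θ m y + K * (ε * T.adaptedNorm θ m y) := by
        gcongr
        exact norm_le_adaptedNorm hθ.le hm y
    _ = (θ + K * ε) * T.adaptedNorm θ m y := by ring

end AdaptedNorm

end ContinuousLinearMap

theorem apply_iterate_le_pow_mul {α : Type*} {d : α → ℝ} {F : α → α} {δ r : ℝ}
    (hd : ∀ p, 0 ≤ d p) (hr0 : 0 ≤ r) (hr1 : r ≤ 1) (hF : ∀ p, d p < δ → d (F p) ≤ r * d p)
    {p : α} (hp : d p < δ) (k : ℕ) : d (F^[k] p) ≤ r ^ k * d p := by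
  induction k with
  | zero => simp
  | succ k ih =>
    have hk : d (F^[k] p) < δ :=
      ih.trans_lt ((mul_le_of_le_one_left (hd p) (pow_le_one₀ hr0 hr1)).trans_lt hp)
    calc d (F^[k + 1] p) = d (F (F^[k] p)) := by rw [Function.iterate_succ_apply']
      _ ≤ r * d (F^[k] p) := hF _ hk
      _ ≤ r * (r ^ k * d p) := mul_le_mul_of_nonneg_left ih hr0
      _ = r ^ (k + 1) * d p := by ring

open ContinuousLinearMap in
/-- **Ostrowski's theorem**. -/
theorem HasFDerivAt.exists_nhds_iterate_norm_sub_le_mul_pow {𝕜 E : Type*}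
    [NontriviallyNormedField 𝕜] [NormedAddCommGroup E] [NormedSpace 𝕜 E]
    {F : E → E} {T : E →L[𝕜] E} {x₀ : E} (hF : HasFDerivAt F T x₀) (hfix : F x₀ = x₀)
    {θ : ℝ} (hθ0 : 0 < θ) (hθ1 : θ < 1) {m : ℕ} (hm : 1 ≤ m) (hTm : ‖T ^ m‖ ≤ θ ^ m) :
    ∃ U ∈ 𝓝 x₀, ∀ p ∈ U, ∃ C : ℝ, 0 < C ∧ ∃ r ∈ Set.Ico (0 : ℝ) 1,
      ∀ k : ℕ, ‖F^[k] p - x₀‖ ≤ C * r ^ k := by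
  set N := T.adaptedNorm θ m
  set K := ∑ i ∈ range m, θ⁻¹ ^ i * ‖T ^ i‖
  have hK : 0 ≤ K := sum_nonneg fun i _ => by positivity
  set ε := (1 - θ) / (2 * (K + 1))
  have hε : 0 < ε := div_pos (by linarith) (by positivity)
  set r := θ + K * ε
  have hr0 : 0 ≤ r := by positivity
  have hr1 : r < 1 := by
    have : K * ε < 1 - θ := by
      rw [mul_div_assoc', div_lt_iff₀ (by positivity)]
      nlinarith
    linarith
  obtain ⟨δ, hδ, hremainder⟩ := Metric.eventually_nhds_iff.mp (hF.isLittleO.def hε)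
  have hcontract : ∀ p, N (p - x₀) < δ → N (F p - x₀) ≤ r * N (p - x₀) := fun p hp => by
    refine adaptedNorm_le_of_norm_sub_apply_le hθ0 hTm hm hε.le ?_
    have hdist : dist p x₀ < δ := by
      rw [dist_eq_norm]
      exact (norm_le_adaptedNorm hθ0.le hm _).trans_lt hp
    simpa only [hfix] using hremainder hdist
  refine ⟨{p | N (p - x₀) < δ}, ?_, fun p hp => ⟨δ, hδ, r, ⟨hr0, hr1⟩, fun k => ?_⟩⟩
  · refine (continuous_adaptedNorm.comp (continuous_sub_right x₀)).continuousAt.preimage_mem_nhds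
      (Iio_mem_nhds ?_)
    simpa [N, adaptedNorm_zero] using hδ
  · calc ‖F^[k] p - x₀‖ ≤ N (F^[k] p - x₀) := norm_le_adaptedNorm hθ0.le hm _
      _ ≤ r ^ k * N (p - x₀) :=
          apply_iterate_le_pow_mul (fun q => adaptedNorm_nonneg hθ0.le (q - x₀)) hr0 hr1.le
            hcontract hp k
      _ ≤ δ * r ^ k := by
          rw [mul_comm]
          gcongr
          exact hp.le

/-- Main local convergence theorem for the Gauss–Newton min-max solver:
    with F(p) = p + h[(λI + v(p)v(p)ᵀ)⁻¹ − I]v(p), v(p̄) = 0, and the eigenvalue/step-size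
    conditions, the iterates converge to p̄ at least linearly in a neighborhood of p̄. -/
theorem gauss_newton_minmax_local_convergence
    (n : ℕ) (v : (Fin n → ℝ) → (Fin n → ℝ)) (hv : ContDiff ℝ 1 v)
    (lam : ℝ) (hlam0 : 0 < lam) (hlam1 : lam < 1) (h : ℝ) (hh : 0 < h)
    (F : (Fin n → ℝ) → (Fin n → ℝ))
    (hF : F = fun p => p + h • ((lam • (1 : Matrix (Fin n) (Fin n) ℝ) +
      Matrix.vecMulVec (v p) (v p))⁻¹ - 1).mulVec (v p))
    (pbar : Fin n → ℝ) (hp : v pbar = 0)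
    (hspec : ∀ ξ ∈ spectrum ℂ
        ((LinearMap.toMatrix' ((fderiv ℝ v pbar : (Fin n → ℝ) →L[ℝ] (Fin n → ℝ)) :
          (Fin n → ℝ) →ₗ[ℝ] (Fin n → ℝ))).map (algebraMap ℝ ℂ)),
        ξ.re < 0 ∧
        h * (1 / lam - 1) < (1 / |ξ.re|) * (2 / (1 + (ξ.im / ξ.re) ^ 2))) :
    ∃ U ∈ nhds pbar, ∀ p₀ ∈ U,
      ∃ C : ℝ, 0 < C ∧ ∃ r ∈ Set.Ico (0 : ℝ) 1,
        ∀ k : ℕ, ‖F^[k] p₀ - pbar‖ ≤ C * r ^ k := by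
  set c := h * (1 / lam - 1)
  have hc : 0 < c := mul_pos hh (by rw [sub_pos, one_lt_div hlam0]; exact hlam1)
  have hF' : F = fun p => p + (h * ((lam + v p ⬝ᵥ v p)⁻¹ - 1)) • v p := by
    rw [hF]
    funext p
    rw [sub_mulVec, one_mulVec, inv_smul_one_add_vecMulVec_self_mulVec hlam0, smul_sub,
      mul_sub, sub_smul, mul_smul, mul_one]
  have hfix : F pbar = pbar := by simp [hF', hp]
  have hvd := hv.differentiable one_ne_zero pbar
  have hg : DifferentiableAt ℝ (fun p => h * ((lam + v p ⬝ᵥ v p)⁻¹ - 1)) pbar := by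
    have hdot : DifferentiableAt ℝ (fun p => v p ⬝ᵥ v p) pbar := by
      simp only [dotProduct]
      fun_prop
    exact (((hdot.const_add lam).inv (by simp [hp, hlam0.ne'])).sub_const 1).const_mul h
  have hderiv : HasFDerivAt F (ContinuousLinearMap.id ℝ _ + c • fderiv ℝ v pbar) pbar := by
    simpa [hF', hp, c] using hvd.hasFDerivAt.add_smul_of_apply_eq_zero hg hp
  have hspec' : ∀ μ ∈ spectrum ℂ
      (ContinuousLinearMap.id ℝ _ + c • fderiv ℝ v pbar).complexMatrix, ‖μ‖ < 1 := by
    rw [ContinuousLinearMap.complexMatrix_id_add_smul,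
      spectrum.one_add_smul_eq_image (by exact_mod_cast hc.ne')]
    rintro _ ⟨ξ, hξ, rfl⟩
    exact Complex.norm_one_add_mul_lt_one hc (hspec ξ hξ).1 (hspec ξ hξ).2
  obtain ⟨θ, hθ0, hθ1, m, hm, hTm⟩ :=
    ContinuousLinearMap.exists_norm_pow_le_of_spectrum_complexMatrix _ hspec'
  exact hderiv.exists_nhds_iterate_norm_sub_le_mul_pow hfix hθ0 hθ1 hm hTm
end
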